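/- arXiv:1306.0057 — 3 statements merged into one kernel-verified Lean document; each statement's English description precedes it below -/
import Mathlib

section
/- Let T be a rooted spanning tree with the running intersection property on index sets γ_1,...,γ_l, with α_k = γ_k ∩ γ_{pa(k)} (and α_k = ∅ at the root). If an element i ∈ γ_k \ α_k is contained in γ_j for some j ≠ k, then γ_j is a descendant of γ_k in T. -/
/-- The intersection graph of the index sets `γ₁, …, γ_l`. -/
def interGraph {l n : ℕ} (γ : Fin l → Finset (Fin n)) : SimpleGraph (Fin l) where
  Adj i j := i ≠ j ∧ (γ i ∩ γ j).Nonempty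
  symm := ⟨fun i j h => ⟨h.1.symm, by simp [Finset.inter_comm]; exact h.2⟩⟩
  loopless := ⟨fun i h => h.1 rfl⟩

/-- The running intersection property for a tree `T` on the index sets:
`γ i ∩ γ j ⊆ γ k` whenever `γ k` lies on the path between `γ i` and `γ j` in `T`. -/
def RIP {l n : ℕ} (γ : Fin l → Finset (Fin n)) (T : SimpleGraph (Fin l)) : Prop :=
  ∀ (i j k : Fin l) (p : T.Walk i j), p.IsPath → k ∈ p.support → γ i ∩ γ j ⊆ γ k

/-!
Let `i ∈ γ k ∖ α k` and `i ∈ γ j` with `j ≠ k`. By the running intersection property `i` lies in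
every set on the tree path from `k` to `j`. The first step of that path therefore avoids the
parent of `k` (which misses `i`), so it goes to a child of `k`; since the path never returns to
`k` and every tree edge joins a vertex to its parent, all later vertices, `j` included, stay
below `k`.
-/

namespace SimpleGraph

variable {V : Type*} {G : SimpleGraph V} {u v r : V}

lemma IsAcyclic.length_eq_dist_of_isPath (hG : G.IsAcyclic) {p : G.Walk u v} (hp : p.IsPath) :
    p.length = G.dist u v := by
  obtain ⟨q, hq, hq_len⟩ := p.reachable.exists_path_of_dist
  rw [← hq_len, Subtype.mk.inj <| (hG.subsingleton_path u v).elim ⟨p, hp⟩ ⟨q, hq⟩]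

lemma IsAcyclic.eq_snd_of_adj_of_dist_lt (hG : G.IsAcyclic) {p : G.Walk u r} (hp : p.IsPath)
    (hadj : G.Adj u v) (hdist : G.dist v r < G.dist u r) : v = p.snd := by
  refine hG.eq_snd_of_adj_start hp hadj (by_contra fun hv => ?_)
  have hlen := hG.length_eq_dist_of_isPath (hp.cons hv (h := hadj.symm))
  rw [Walk.length_cons, hG.length_eq_dist_of_isPath hp] at hlen
  omega

def IsParentMap (G : SimpleGraph V) (r : V) (pa : V → V) : Prop :=
  ∀ k, k ≠ r → G.Adj k (pa k) ∧ G.dist (pa k) r < G.dist k r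

def IsDescendant (pa : V → V) (j k : V) : Prop :=
  ∃ m, pa^[m] j = k

namespace IsParentMap

variable {pa : V → V}

lemma isDescendant_root (hpa : G.IsParentMap r pa) (u : V) : IsDescendant pa u r := by
  induction hd : G.dist u r using Nat.strong_induction_on generalizing u with
  | _ d ih =>
    by_cases hu : u = r
    · exact ⟨0, hu⟩
    · obtain ⟨m, hm⟩ := ih _ (hd ▸ (hpa u hu).2) (pa u) rfl
      exact ⟨m + 1, hm⟩

lemma eq_of_adj_of_dist_lt (hG : G.IsTree) (hpa : G.IsParentMap r pa) (hu : u ≠ r)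
    (hadj : G.Adj u v) (hdist : G.dist v r < G.dist u r) : v = pa u := by
  obtain ⟨p, hp⟩ := hG.connected.exists_isPath u r
  rw [hG.isAcyclic.eq_snd_of_adj_of_dist_lt hp hadj hdist,
    hG.isAcyclic.eq_snd_of_adj_of_dist_lt hp (hpa u hu).1 (hpa u hu).2]

lemma eq_or_eq_of_adj (hG : G.IsTree) (hpa : G.IsParentMap r pa) (hadj : G.Adj u v) :
    v = pa u ∨ u = pa v := by
  have ne_root {x y : V} (h : G.dist x r = G.dist y r + 1) : x ≠ r := by
    rintro rfl
    simp at h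
  rcases hG.dist_eq_dist_add_one_of_adj r hadj with h | h <;>
    rw [dist_comm (u := r) (v := u), dist_comm (u := r) (v := v)] at h
  · exact .inl <| hpa.eq_of_adj_of_dist_lt hG (ne_root h) hadj (by omega)
  · exact .inr <| hpa.eq_of_adj_of_dist_lt hG (ne_root h) hadj.symm (by omega)

lemma isDescendant_of_adj (hG : G.IsTree) (hpa : G.IsParentMap r pa) {a b k : V}
    (hadj : G.Adj a b) (hak : a ≠ k) (ha : IsDescendant pa a k) : IsDescendant pa b k := by
  obtain ⟨m, hm⟩ := ha
  rcases hpa.eq_or_eq_of_adj hG hadj with rfl | rfl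
  · cases m with
    | zero => exact absurd hm hak
    | succ m => exact ⟨m, hm⟩
  · exact ⟨m + 1, hm⟩

lemma isDescendant_of_walk (hG : G.IsTree) (hpa : G.IsParentMap r pa) {a b k : V}
    (p : G.Walk a b) (hk : k ∉ p.support) (ha : IsDescendant pa a k) : IsDescendant pa b k := by
  induction p with
  | nil => exact ha
  | cons hadj p ih =>
    rw [Walk.support_cons, List.mem_cons, not_or] at hk
    exact ih hk.2 (hpa.isDescendant_of_adj hG hadj (Ne.symm hk.1) ha)

end IsParentMap

end SimpleGraph

theorem stmt5_general {l n : ℕ} (γ : Fin l → Finset (Fin n))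
    (T : SimpleGraph (Fin l)) (hTtree : T.IsTree)
    (hrip : RIP γ T)
    (r : Fin l) (pa : Fin l → Fin l)
    (hpa : ∀ k, k ≠ r → T.Adj k (pa k) ∧ T.dist (pa k) r < T.dist k r) :
    ∀ (i : Fin n) (k j : Fin l),
      i ∈ γ k \ (if k = r then (∅ : Finset (Fin n)) else γ k ∩ γ (pa k)) →
      j ≠ k → i ∈ γ j → ∃ m : ℕ, pa^[m] j = k := by
  have hpa : T.IsParentMap r pa := hpa
  intro i k j hik hjk hij
  by_cases hk : k = r
  · subst hk
    exact hpa.isDescendant_root j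
  rw [if_neg hk, Finset.mem_sdiff, Finset.mem_inter, not_and] at hik
  obtain ⟨p, hp⟩ := hTtree.connected.exists_isPath k j
  cases p with
  | nil => exact absurd rfl hjk
  | @cons _ b _ hkb q =>
    have hib : i ∈ γ b := hrip k j b _ hp (by simp) (Finset.mem_inter.mpr ⟨hik.1, hij⟩)
    obtain ⟨-, hkq⟩ := (SimpleGraph.Walk.cons_isPath_iff hkb q).mp hp
    rcases hpa.eq_or_eq_of_adj hTtree hkb with rfl | hkb
    · exact absurd hib (hik.2 hik.1)
    · exact hpa.isDescendant_of_walk hTtree q hkq ⟨1, hkb.symm⟩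

theorem stmt5 {l n : ℕ} (γ : Fin l → Finset (Fin n))
    (hmax : ∀ i j, i ≠ j → ¬ γ i ⊆ γ j)
    (T : SimpleGraph (Fin l)) (hTsub : T ≤ interGraph γ) (hTtree : T.IsTree)
    (hrip : RIP γ T)
    (r : Fin l) (pa : Fin l → Fin l) (hparoot : pa r = r)
    (hpa : ∀ k, k ≠ r → T.Adj k (pa k) ∧ T.dist (pa k) r < T.dist k r) :
    ∀ (i : Fin n) (k j : Fin l),
      i ∈ γ k \ (if k = r then (∅ : Finset (Fin n)) else γ k ∩ γ (pa k)) →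
      j ≠ k → i ∈ γ j → ∃ m : ℕ, pa^[m] j = k :=
  stmt5_general γ T hTtree hrip r pa hpa
end

section
/- Let T be a rooted spanning tree with the running intersection property on index sets γ_1,...,γ_l covering {1,...,n}, with α_j = γ_j ∩ γ_{pa(j)}. A vector x̃ = (x̃_1,...,x̃_l) with x̃_k ∈ R^{|γ_k|} satisfies E_{α_j}(E_{γ_j}^T x̃_j − E_{γ_k}^T x̃_k) = 0 for all k and all children γ_j of γ_k in T if and only if there exists x ∈ R^n with x̃_k = E_{γ_k} x for all k. -/
/-- `E_γ` : extraction of the subvector of `x` indexed by `γ`. -/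
def Eext {n : ℕ} (γ : Finset (Fin n)) (x : Fin n → ℝ) : {i // i ∈ γ} → ℝ :=
  fun i => x i.1

/-- `E_γᵀ` : embedding of a `|γ|`-vector into `ℝⁿ` by zero-filling. -/
def Eemb {n : ℕ} (γ : Finset (Fin n)) (y : {i // i ∈ γ} → ℝ) : Fin n → ℝ :=
  fun i => if h : i ∈ γ then y ⟨i, h⟩ else 0

/-! The parent–child conditions say that `x̃ j` and `x̃ (pa j)` agree on `γ j ∩ γ (pa j)`. In a tree
where parents are strictly closer to the root, every edge joins a vertex to its parent, so
neighbouring blocks agree on their overlaps. By the running intersection property an index shared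
by `γ a` and `γ b` lies in every block on the tree path from `a` to `b`, so agreement propagates
along that path; pairwise agreement on overlaps then glues the blocks into one `x` on the cover. -/

namespace SimpleGraph

variable {V : Type*} {G : SimpleGraph V}

lemma IsTree.eq_penultimate_of_adj_of_dist_lt (hG : G.IsTree) {r a b : V} {p : G.Walk r a}
    (hp : p.IsPath) (hab : G.Adj a b) (hb : G.dist r b < G.dist r a) : b = p.penultimate := by
  classical
  obtain ⟨q, hq, hqd⟩ := (hG.connected r b).exists_path_of_dist
  have ha : a ∉ q.support := fun ha => by
    have := (dist_le (q.takeUntil a ha)).trans (q.length_takeUntil_le_length ha)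
    omega
  exact hG.isAcyclic.eq_penultimate_of_adj_end hp hab
    (hG.isAcyclic.mem_support_of_ne_mem_support_of_adj_of_isPath hp hq hab ha)

lemma IsTree.eq_of_adj_of_dist_lt (hG : G.IsTree) {r a b c : V} (hab : G.Adj a b)
    (hac : G.Adj a c) (hb : G.dist r b < G.dist r a) (hc : G.dist r c < G.dist r a) : b = c := by
  obtain ⟨p, hp⟩ := (hG.existsUnique_path r a).exists
  rw [hG.eq_penultimate_of_adj_of_dist_lt hp hab hb, hG.eq_penultimate_of_adj_of_dist_lt hp hac hc]

lemma IsTree.parent_eq_of_adj (hG : G.IsTree) {r : V} {pa : V → V}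
    (hpa : ∀ k, k ≠ r → G.Adj k (pa k) ∧ G.dist (pa k) r < G.dist k r) {a b : V}
    (hab : G.Adj a b) : (a ≠ r ∧ pa a = b) ∨ (b ≠ r ∧ pa b = a) := by
  wlog hba : G.dist r b < G.dist r a generalizing a b
  · exact (this hab.symm <| (not_lt.1 hba).lt_of_ne (hG.dist_ne_of_adj r hab)).symm
  have har : a ≠ r := by
    rintro rfl
    simp at hba
  obtain ⟨hpa_adj, hpa_lt⟩ := hpa a har
  rw [dist_comm, dist_comm (u := a)] at hpa_lt
  exact Or.inl ⟨har, hG.eq_of_adj_of_dist_lt hpa_adj hab hpa_lt hba⟩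

end SimpleGraph

section Gluing

variable {ι α β : Type*} {γ : ι → Finset α}

def AgreeOnInter (xt : (k : ι) → {i // i ∈ γ k} → β) (a b : ι) : Prop :=
  ∀ (i : α) (ha : i ∈ γ a) (hb : i ∈ γ b), xt a ⟨i, ha⟩ = xt b ⟨i, hb⟩

variable {xt : (k : ι) → {i // i ∈ γ k} → β}

lemma AgreeOnInter.symm {a b : ι} (h : AgreeOnInter xt a b) : AgreeOnInter xt b a :=
  fun i hb ha => (h i ha hb).symm

lemma apply_eq_of_walk_of_agreeOnInter {G : SimpleGraph ι}
    (hG : ∀ a b, G.Adj a b → AgreeOnInter xt a b) {a b : ι} (p : G.Walk a b) {i : α}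
    (hi : ∀ m ∈ p.support, i ∈ γ m) (ha : i ∈ γ a)
    (hb : i ∈ γ b) : xt a ⟨i, ha⟩ = xt b ⟨i, hb⟩ := by
  induction p with
  | nil => rfl
  | cons hadj q ih =>
    have hi' : i ∈ γ _ := hi _ (List.mem_cons_of_mem _ q.start_mem_support)
    rw [hG _ _ hadj i ha hi']
    exact ih (fun m hm => hi m (List.mem_cons_of_mem _ hm)) hi' hb

lemma exists_eq_restrict_of_agreeOnInter (hcover : ∀ i, ∃ k, i ∈ γ k)
    (h : ∀ a b, AgreeOnInter xt a b) : ∃ x : α → β, ∀ k, xt k = fun i : {i // i ∈ γ k} => x i :=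
  ⟨Set.liftCover (fun k => (γ k : Set α)) xt h (Set.iUnion_eq_univ_iff.2 hcover),
    fun _ => funext fun i => (Set.liftCover_coe (S := fun k => (γ k : Set α)) i).symm⟩

end Gluing

lemma agreeOnInter_of_rip {l n : ℕ} {γ : Fin l → Finset (Fin n)} {T : SimpleGraph (Fin l)}
    (hT : T.IsTree) (hrip : RIP γ T) {xt : (k : Fin l) → {i // i ∈ γ k} → ℝ}
    (hadj : ∀ a b, T.Adj a b → AgreeOnInter xt a b) (a b : Fin l) : AgreeOnInter xt a b := by
  intro i ha hb
  obtain ⟨p, hp⟩ := (hT.existsUnique_path a b).exists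
  refine apply_eq_of_walk_of_agreeOnInter hadj p (fun m hm => ?_) ha hb
  exact hrip a b m p hp hm (Finset.mem_inter.2 ⟨ha, hb⟩)

lemma eext_inter_eemb_sub_eemb_eq_zero_iff {l n : ℕ} {γ : Fin l → Finset (Fin n)}
    (xt : (k : Fin l) → {i // i ∈ γ k} → ℝ) (j k : Fin l) :
    Eext (γ j ∩ γ k) (Eemb (γ j) (xt j) - Eemb (γ k) (xt k)) = 0 ↔ AgreeOnInter xt j k := by
  constructor
  · intro h i hj hk
    simpa [Eext, Eemb, hj, hk, sub_eq_zero] using congrFun h ⟨i, Finset.mem_inter.2 ⟨hj, hk⟩⟩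
  · intro h
    funext ⟨i, hi⟩
    obtain ⟨hj, hk⟩ := Finset.mem_inter.1 hi
    simp [Eext, Eemb, hj, hk, h i hj hk]

theorem stmt7_general {l n : ℕ} (γ : Fin l → Finset (Fin n))
    (hcover : ∀ i : Fin n, ∃ k, i ∈ γ k)
    (T : SimpleGraph (Fin l)) (hTtree : T.IsTree)
    (hrip : RIP γ T)
    (r : Fin l) (pa : Fin l → Fin l)
    (hpa : ∀ k, k ≠ r → T.Adj k (pa k) ∧ T.dist (pa k) r < T.dist k r)
    (xt : (k : Fin l) → ({i // i ∈ γ k} → ℝ)) :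
    (∀ k j, j ≠ r → pa j = k →
        Eext (if j = r then (∅ : Finset (Fin n)) else γ j ∩ γ (pa j))
          (Eemb (γ j) (xt j) - Eemb (γ k) (xt k)) = 0)
    ↔ ∃ x : Fin n → ℝ, ∀ k, xt k = Eext (γ k) x := by
  have hcond : (∀ k j, j ≠ r → pa j = k →
      Eext (if j = r then (∅ : Finset (Fin n)) else γ j ∩ γ (pa j))
        (Eemb (γ j) (xt j) - Eemb (γ k) (xt k)) = 0) ↔ ∀ j, j ≠ r → AgreeOnInter xt j (pa j) := by
    refine ⟨fun h j hj => ?_, fun h k j hj hjk => ?_⟩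
    · have := h _ j hj rfl
      rwa [if_neg hj, eext_inter_eemb_sub_eemb_eq_zero_iff] at this
    · subst hjk
      rw [if_neg hj, eext_inter_eemb_sub_eemb_eq_zero_iff]
      exact h j hj
  rw [hcond]
  constructor
  · intro h
    refine exists_eq_restrict_of_agreeOnInter hcover <|
      agreeOnInter_of_rip hTtree hrip fun a b hab => ?_
    rcases hTtree.parent_eq_of_adj hpa hab with ⟨ha, rfl⟩ | ⟨hb, rfl⟩
    exacts [h a ha, (h b hb).symm]
  · rintro ⟨x, hx⟩ j _ i hj hk
    simp only [hx, Eext]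

theorem stmt7 {l n : ℕ} (γ : Fin l → Finset (Fin n))
    (hcover : ∀ i : Fin n, ∃ k, i ∈ γ k)
    (T : SimpleGraph (Fin l)) (hTsub : T ≤ interGraph γ) (hTtree : T.IsTree)
    (hrip : RIP γ T)
    (r : Fin l) (pa : Fin l → Fin l) (hparoot : pa r = r)
    (hpa : ∀ k, k ≠ r → T.Adj k (pa k) ∧ T.dist (pa k) r < T.dist k r)
    (xt : (k : Fin l) → ({i // i ∈ γ k} → ℝ)) :
    (∀ k j, j ≠ r → pa j = k →
        Eext (if j = r then (∅ : Finset (Fin n)) else γ j ∩ γ (pa j))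
          (Eemb (γ j) (xt j) - Eemb (γ k) (xt k)) = 0)
    ↔ ∃ x : Fin n → ℝ, ∀ k, xt k = Eext (γ k) x :=
  stmt7_general γ hcover T hTtree hrip r pa hpa xt
end

section
/- Let V = range(E) with E the stacked matrix of blocks E_{γ_k}, let T be a rooted spanning tree with the running intersection property on index sets γ_1,...,γ_l, and let α_j = γ_j ∩ γ_{pa(j)} (α_root = ∅). A tuple s̃ = (s̃_1,...,s̃_l) lies in the orthogonal complement V^⊥ if and only if there exist vectors u_j ∈ R^{|α_j|}, j = 1,...,l, such that s̃_k = E_{γ_k}( E_{α_k}^T u_k − ∑_{γ_j ∈ ch(γ_k)} E_{α_j}^T u_j ) for every k, where ch(γ_k) denotes the children of γ_k in T. -/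
/-- The stacked linear map `E` with row blocks `E_{γ_k}`. -/
noncomputable def Emap {n l : ℕ} (γ : Fin l → Finset (Fin n)) :
    EuclideanSpace ℝ (Fin n) →ₗ[ℝ]
      EuclideanSpace ℝ ((k : Fin l) × {i : Fin n // i ∈ γ k}) where
  toFun x := WithLp.toLp 2 (fun q => x q.2.1)
  map_add' := fun _ _ => rfl
  map_smul' := fun _ _ => rfl

/-!
Write `F_k = E_{γ_k}ᵀ s̃_k`; then `s̃ ∈ V^⊥` exactly when `∑_k F_k = 0`. For the forward direction
take `u_j` to be the subtree sum `A_j = ∑_{m ≽ j} F_m` restricted to `α_j`. Subtree sums satisfy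
`A_k = F_k + ∑_{j ∈ ch(k)} A_j`, so it remains to see that restricting to the separators loses
nothing at a coordinate `x ∈ γ_k`. By the running intersection property the nodes whose index set
contains `x` form a subtree of `T`. Hence a child `j` with `x ∉ γ_j` has no descendant containing
`x`, and if `x ∉ α_k` then `k` is the top of that subtree, so `A_k(x) = ∑_m F_m(x) = 0`.
Conversely, summing the formula over `k` telescopes to the root term, which vanishes as
`α_root = ∅`.
-/

open SimpleGraph Finset

theorem Eemb_apply_restrict {n : ℕ} (s : Finset (Fin n)) (g : Fin n → ℝ) (i : Fin n) :
    Eemb s (fun j => g j.1) i = if i ∈ s then g i else 0 := by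
  unfold Eemb; split_ifs <;> rfl

@[simp]
theorem Eemb_apply_coe {n : ℕ} {s : Finset (Fin n)} (y : {i // i ∈ s} → ℝ)
    (i : {i // i ∈ s}) : Eemb s y i = y i :=
  dif_pos i.2

theorem Eemb_apply_of_notMem {n : ℕ} {s : Finset (Fin n)} (y : {i // i ∈ s} → ℝ) {i : Fin n}
    (hi : i ∉ s) : Eemb s y i = 0 :=
  dif_neg hi

theorem sum_Eemb_mul {n : ℕ} (s : Finset (Fin n)) (y : {i // i ∈ s} → ℝ)
    (v : Fin n → ℝ) :
    ∑ i, Eemb s y i * v i = ∑ i : {i // i ∈ s}, y i * v i := by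
  rw [← sum_subset (subset_univ s) fun i _ hi => by rw [Eemb_apply_of_notMem y hi, zero_mul],
    ← sum_coe_sort]
  simp

theorem inner_Emap {n l : ℕ} (γ : Fin l → Finset (Fin n)) (x : EuclideanSpace ℝ (Fin n))
    (st : EuclideanSpace ℝ ((k : Fin l) × {i : Fin n // i ∈ γ k})) :
    inner ℝ (Emap γ x) st =
      inner ℝ x (WithLp.toLp 2 (∑ k, Eemb (γ k) (fun i => st ⟨k, i⟩))) := by
  simp only [PiLp.inner_apply, RCLike.inner_apply, conj_trivial, Fintype.sum_sigma,
    Finset.sum_apply, sum_mul]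
  rw [sum_comm]
  refine sum_congr rfl fun k _ => ?_
  rw [sum_Eemb_mul]
  rfl

theorem mem_orthogonal_range_Emap_iff {n l : ℕ} (γ : Fin l → Finset (Fin n))
    (st : EuclideanSpace ℝ ((k : Fin l) × {i : Fin n // i ∈ γ k})) :
    st ∈ (LinearMap.range (Emap γ))ᗮ ↔ ∑ k, Eemb (γ k) (fun i => st ⟨k, i⟩) = 0 := by
  simp only [Submodule.mem_orthogonal, LinearMap.mem_range, forall_exists_index,
    forall_apply_eq_imp_iff, inner_Emap]
  constructor
  · intro h
    exact congrArg WithLp.ofLp (inner_self_eq_zero.mp (h _))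
  · intro h x
    simp [h]

section RootedForest

variable {α : Type*} (pa : α → α)

def IsAncestor (a m : α) : Prop := ∃ s, pa^[s] m = a

variable {pa} {a b m r : α} {d : α → ℕ}

theorem IsAncestor.refl (a : α) : IsAncestor pa a a := ⟨0, rfl⟩

theorem IsAncestor.parent_left (h : IsAncestor pa a m) : IsAncestor pa (pa a) m := by
  obtain ⟨s, rfl⟩ := h
  exact ⟨s + 1, Function.iterate_succ_apply' pa s m⟩

theorem IsAncestor.of_parent_right (h : IsAncestor pa a (pa m)) : IsAncestor pa a m := by
  obtain ⟨s, rfl⟩ := h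
  exact ⟨s + 1, Function.iterate_succ_apply pa s m⟩

theorem IsAncestor.parent_right_of_ne (h : IsAncestor pa a m) (hne : a ≠ m) :
    IsAncestor pa a (pa m) := by
  obtain ⟨_ | s, rfl⟩ := h
  · exact absurd rfl hne
  · exact ⟨s, (Function.iterate_succ_apply pa s m).symm⟩

theorem IsAncestor.total (ha : IsAncestor pa a m) (hb : IsAncestor pa b m) :
    IsAncestor pa a b ∨ IsAncestor pa b a := by
  obtain ⟨s, rfl⟩ := ha
  obtain ⟨t, rfl⟩ := hb
  rcases le_total s t with hst | hts
  · obtain ⟨w, rfl⟩ := Nat.exists_eq_add_of_le hst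
    exact Or.inr ⟨w, by rw [add_comm, Function.iterate_add_apply]⟩
  · obtain ⟨w, rfl⟩ := Nat.exists_eq_add_of_le hts
    exact Or.inl ⟨w, by rw [add_comm, Function.iterate_add_apply]⟩

theorem isAncestor_root (hd : ∀ k, k ≠ r → d (pa k) < d k) (m : α) : IsAncestor pa r m := by
  induction hm : d m using Nat.strong_induction_on generalizing m with
  | _ e ih =>
    by_cases hmr : m = r
    · exact hmr ▸ IsAncestor.refl m
    · exact (ih _ (hm ▸ hd m hmr) (pa m) rfl).of_parent_right

theorem rank_iterate_le (hroot : pa r = r) (hd : ∀ k, k ≠ r → d (pa k) < d k) (s : ℕ)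
    (m : α) : d (pa^[s] m) ≤ d m := by
  induction s with
  | zero => rfl
  | succ s ih =>
    rw [Function.iterate_succ_apply']
    by_cases h : pa^[s] m = r
    · rwa [h, hroot, ← h]
    · exact (hd _ h).le.trans ih

theorem not_isAncestor_parent (hroot : pa r = r) (hd : ∀ k, k ≠ r → d (pa k) < d k)
    (hm : m ≠ r) : ¬ IsAncestor pa m (pa m) := by
  rintro ⟨s, hs⟩
  have := rank_iterate_le hroot hd s (pa m)
  rw [hs] at this
  exact (hd m hm).not_ge this

theorem IsAncestor.exists_child (hroot : pa r = r) (h : IsAncestor pa a m) (hne : m ≠ a) :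
    ∃ j, (j ≠ r ∧ pa j = a) ∧ IsAncestor pa j m := by
  obtain ⟨s, hs⟩ := h
  induction s generalizing m with
  | zero => exact absurd hs hne
  | succ s ih =>
    rw [Function.iterate_succ_apply] at hs
    by_cases hpm : pa m = a
    · refine ⟨m, ⟨?_, hpm⟩, IsAncestor.refl m⟩
      rintro rfl
      exact hne (hroot ▸ hpm)
    · obtain ⟨j, hja, hj⟩ := ih hpm hs
      exact ⟨j, hja, hj.of_parent_right⟩

theorem eq_of_isAncestor_of_parent_eq (hroot : pa r = r) (hd : ∀ k, k ≠ r → d (pa k) < d k)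
    {j j' : α} (hj : j ≠ r) (hj' : j' ≠ r) (hpa : pa j = pa j') (hjm : IsAncestor pa j m)
    (hj'm : IsAncestor pa j' m) : j = j' := by
  by_contra hne
  rcases hjm.total hj'm with h | h
  · exact not_isAncestor_parent hroot hd hj (hpa ▸ h.parent_right_of_ne hne)
  · exact not_isAncestor_parent hroot hd hj' (hpa ▸ h.parent_right_of_ne (Ne.symm hne))

variable [Fintype α]

open Classical in
noncomputable def subtree (pa : α → α) (k : α) : Finset α := univ.filter (IsAncestor pa k)

@[simp]
theorem mem_subtree {k : α} : m ∈ subtree pa k ↔ IsAncestor pa k m := by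
  simp [subtree]

variable [DecidableEq α]

def children (pa : α → α) (r k : α) : Finset α := univ.filter (fun j => j ≠ r ∧ pa j = k)

@[simp]
theorem mem_children {j k : α} : j ∈ children pa r k ↔ j ≠ r ∧ pa j = k := by
  simp [children]

theorem sum_sub_sum_children {M : Type*} [AddCommGroup M] (pa : α → α) (r : α) (g : α → M) :
    ∑ k, (g k - ∑ j ∈ children pa r k, g j) = g r := by
  have hfib : ∀ k, children pa r k = (univ.filter (· ≠ r)).filter (pa · = k) := fun k => by
    rw [children, filter_filter]
  simp_rw [sum_sub_distrib, hfib, sum_fiberwise, filter_ne']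
  rw [← add_sum_erase univ g (mem_univ r), add_sub_cancel_right]

theorem subtree_eq_insert_biUnion (hroot : pa r = r) (k : α) :
    subtree pa k = insert k ((children pa r k).biUnion (subtree pa)) := by
  ext m
  simp only [mem_subtree, mem_insert, mem_biUnion, mem_children]
  constructor
  · intro h
    by_cases hmk : m = k
    · exact Or.inl hmk
    · exact Or.inr (h.exists_child hroot hmk)
  · rintro (rfl | ⟨j, ⟨-, rfl⟩, hj⟩)
    · exact IsAncestor.refl m
    · exact hj.parent_left

theorem sum_subtree {M : Type*} [AddCommMonoid M] (hroot : pa r = r)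
    (hd : ∀ k, k ≠ r → d (pa k) < d k) (F : α → M) (k : α) :
    ∑ m ∈ subtree pa k, F m = F k + ∑ j ∈ children pa r k, ∑ m ∈ subtree pa j, F m := by
  rw [subtree_eq_insert_biUnion hroot, sum_insert, sum_biUnion]
  · intro j hj j' hj' hne
    rw [mem_coe, mem_children] at hj hj'
    refine disjoint_left.mpr fun m hjm hj'm => hne ?_
    rw [mem_subtree] at hjm hj'm
    exact eq_of_isAncestor_of_parent_eq hroot hd hj.1 hj'.1 (hj.2.trans hj'.2.symm) hjm hj'm
  · simp only [mem_biUnion, mem_children, mem_subtree, not_exists, not_and, and_imp]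
    rintro j hj rfl
    exact not_isAncestor_parent hroot hd hj

end RootedForest

section RootedTree

variable {α : Type*} {T : SimpleGraph α} {pa : α → α} {r : α} {d : α → ℕ}

theorem SimpleGraph.IsTree.adj_parent [Fintype α] (hT : T.IsTree)
    (hd : ∀ k, k ≠ r → d (pa k) < d k) (hadj : ∀ k, k ≠ r → T.Adj k (pa k)) {a b : α}
    (h : T.Adj a b) : pa a = b ∨ pa b = a := by
  -- The parent edges `s(k, pa k)`, `k ≠ r`, are distinct, and a tree has one edge fewer than
  -- vertices, so they are all the edges.
  classical
  let e : α → Sym2 α := fun k => s(k, pa k)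
  have he : Set.InjOn e ↑(univ.erase r) := by
    intro k hk k' hk' hkk'
    rw [mem_coe, mem_erase] at hk hk'
    rcases Sym2.eq_iff.mp hkk' with ⟨h, -⟩ | ⟨h, h'⟩
    · exact h
    · have h1 := hd k hk.1
      have h2 := hd k' hk'.1
      rw [h'] at h1
      rw [← h] at h2
      omega
  have hsub : (univ.erase r).image e ⊆ T.edgeFinset := by
    intro z hz
    obtain ⟨k, hk, rfl⟩ := mem_image.mp hz
    exact mem_edgeFinset.mpr (hadj k (ne_of_mem_erase hk))
  have hcard : T.edgeFinset.card ≤ ((univ.erase r).image e).card := by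
    rw [card_image_of_injOn he, card_erase_of_mem (mem_univ r), card_univ,
      ← hT.card_edgeFinset, Nat.add_sub_cancel]
  have hab : s(a, b) ∈ (univ.erase r).image e := by
    rw [eq_of_subset_of_card_le hsub hcard]
    exact mem_edgeFinset.mpr h
  obtain ⟨k, -, hk⟩ := mem_image.mp hab
  rcases Sym2.eq_iff.mp hk with ⟨rfl, rfl⟩ | ⟨rfl, rfl⟩
  · exact Or.inl rfl
  · exact Or.inr rfl

variable (hparent : ∀ a b, T.Adj a b → pa a = b ∨ pa b = a)

include hparent in
theorem SimpleGraph.Walk.mem_support_of_isAncestor {a m k : α} (p : T.Walk m k)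
    (hm : IsAncestor pa a m) (hk : ¬ IsAncestor pa a k) : a ∈ p.support := by
  induction p with
  | nil => exact absurd hm hk
  | @cons m y k h q ih =>
    by_cases ham : a = m
    · exact ham ▸ q.support.mem_cons_self
    rw [Walk.support_cons]
    refine List.mem_cons_of_mem _ (ih ?_ hk)
    rcases hparent m y h with rfl | rfl
    · exact hm.parent_right_of_ne ham
    · exact hm.of_parent_right

include hparent in
theorem SimpleGraph.Walk.IsPath.isAncestor_or_parent_mem_support {m k : α} {p : T.Walk m k}
    (hp : p.IsPath) : IsAncestor pa m k ∨ pa m ∈ p.support := by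
  induction p with
  | nil => exact Or.inl (IsAncestor.refl _)
  | @cons m y k h q ih =>
    rw [Walk.cons_isPath_iff] at hp
    rcases hparent m y h with rfl | rfl
    · exact Or.inr (List.mem_cons_of_mem _ q.start_mem_support)
    · rcases ih hp.1 with hy | hy
      · exact Or.inl hy.parent_left
      · exact absurd hy hp.2

def IsPathConvex (T : SimpleGraph α) (S : Set α) : Prop :=
  ∀ a b c (p : T.Walk a b), p.IsPath → c ∈ p.support → a ∈ S → b ∈ S → c ∈ S

variable {S : Set α} {M : Type*} [AddCommMonoid M] {F : α → M} [Fintype α]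
variable (hconn : T.Connected) (hroot : pa r = r) (hd : ∀ k, k ≠ r → d (pa k) < d k)

include hconn hparent hroot hd in
theorem IsPathConvex.sum_subtree_eq_zero_of_parent_mem (hS : IsPathConvex T S)
    (hF : ∀ m ∉ S, F m = 0) {j : α} (hj : j ≠ r) (hpj : pa j ∈ S) (hjS : j ∉ S) :
    ∑ m ∈ subtree pa j, F m = 0 := by
  refine sum_eq_zero fun m hm => hF m fun hmS => hjS ?_
  obtain ⟨p, hp⟩ := (hconn m (pa j)).exists_isPath
  refine hS _ _ _ p hp (p.mem_support_of_isAncestor hparent (mem_subtree.mp hm) ?_) hmS hpj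
  exact not_isAncestor_parent hroot hd hj

include hconn hparent hd in
theorem IsPathConvex.sum_subtree_eq_sum_of_parent_notMem (hS : IsPathConvex T S)
    (hF : ∀ m ∉ S, F m = 0) {k : α} (hk : k ∈ S) (htop : k ≠ r → pa k ∉ S) :
    ∑ m ∈ subtree pa k, F m = ∑ m, F m := by
  refine sum_subset (subset_univ _) fun m _ hm => hF m fun hmS => hm ?_
  rw [mem_subtree]
  by_cases hkr : k = r
  · exact hkr ▸ isAncestor_root hd m
  obtain ⟨p, hp⟩ := (hconn k m).exists_isPath
  exact (hp.isAncestor_or_parent_mem_support hparent).resolve_right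
    fun h => htop hkr (hS _ _ _ p hp h hk hmS)

end RootedTree

theorem RIP.isPathConvex {l n : ℕ} {γ : Fin l → Finset (Fin n)} {T : SimpleGraph (Fin l)}
    (h : RIP γ T) (x : Fin n) : IsPathConvex T {k | x ∈ γ k} :=
  fun a b c p hp hc ha hb => h a b c p hp hc (mem_inter.mpr ⟨ha, hb⟩)

section Separator

variable {n l : ℕ} (γ : Fin l → Finset (Fin n)) (pa : Fin l → Fin l) (r : Fin l)

def separator (j : Fin l) : Finset (Fin n) := if j = r then ∅ else γ j ∩ γ (pa j)

variable {γ pa r}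

theorem mem_separator {j : Fin l} {x : Fin n} :
    x ∈ separator γ pa r j ↔ j ≠ r ∧ x ∈ γ j ∧ x ∈ γ (pa j) := by
  unfold separator
  split_ifs with h <;> simp [h]

theorem sum_Eemb_eq_zero_of_separator_potential
    (st : EuclideanSpace ℝ ((k : Fin l) × {i : Fin n // i ∈ γ k}))
    (u : (j : Fin l) → {i // i ∈ separator γ pa r j} → ℝ)
    (hu : ∀ (k : Fin l) (i : {i : Fin n // i ∈ γ k}), st ⟨k, i⟩ =
      (Eemb (separator γ pa r k) (u k) -
        ∑ j ∈ children pa r k, Eemb (separator γ pa r j) (u j)) i.1) :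
    ∑ k, Eemb (γ k) (fun i => st ⟨k, i⟩) = 0 := by
  funext x
  set G : Fin l → ℝ := fun j => Eemb (separator γ pa r j) (u j) x
  have hG : ∀ k,
      Eemb (γ k) (fun i => st ⟨k, i⟩) x = G k - ∑ j ∈ children pa r k, G j := by
    intro k
    by_cases hx : x ∈ γ k
    · calc Eemb (γ k) (fun i => st ⟨k, i⟩) x
          = st ⟨k, ⟨x, hx⟩⟩ := Eemb_apply_coe _ ⟨x, hx⟩
        _ = G k - ∑ j ∈ children pa r k, G j := by
          rw [hu k ⟨x, hx⟩, Pi.sub_apply, Finset.sum_apply]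
    · have hGk : G k = 0 := Eemb_apply_of_notMem _ fun h => hx (mem_separator.mp h).2.1
      have hGchildren : ∑ j ∈ children pa r k, G j = 0 := sum_eq_zero fun j hj =>
        Eemb_apply_of_notMem _ fun h => hx ((mem_children.mp hj).2 ▸ (mem_separator.mp h).2.2)
      rw [Eemb_apply_of_notMem _ hx, hGk, hGchildren, sub_zero]
  rw [Finset.sum_apply, sum_congr rfl fun k _ => hG k, sum_sub_sum_children]
  exact Eemb_apply_of_notMem _ fun h => (mem_separator.mp h).1 rfl

theorem exists_separator_potential_of_sum_Eemb_eq_zero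
    {T : SimpleGraph (Fin l)} {d : Fin l → ℕ}
    (hconn : T.Connected) (hrip : RIP γ T) (hparent : ∀ a b, T.Adj a b → pa a = b ∨ pa b = a)
    (hroot : pa r = r) (hd : ∀ k, k ≠ r → d (pa k) < d k)
    (st : EuclideanSpace ℝ ((k : Fin l) × {i : Fin n // i ∈ γ k}))
    (H : ∑ k, Eemb (γ k) (fun i => st ⟨k, i⟩) = 0) :
    ∃ u : (j : Fin l) → {i // i ∈ separator γ pa r j} → ℝ,
      ∀ (k : Fin l) (i : {i : Fin n // i ∈ γ k}), st ⟨k, i⟩ =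
        (Eemb (separator γ pa r k) (u k) -
          ∑ j ∈ children pa r k, Eemb (separator γ pa r j) (u j)) i.1 := by
  set F : Fin l → Fin n → ℝ := fun m => Eemb (γ m) (fun i => st ⟨m, i⟩)
  refine ⟨fun j i => ∑ m ∈ subtree pa j, F m i, fun k ⟨x, hx⟩ => ?_⟩
  have hS := hrip.isPathConvex x
  have hF : ∀ m ∉ {m | x ∈ γ m}, F m x = 0 := fun m hm => Eemb_apply_of_notMem _ hm
  have hown : Eemb (separator γ pa r k) (fun i => ∑ m ∈ subtree pa k, F m i) x =
      ∑ m ∈ subtree pa k, F m x := by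
    rw [Eemb_apply_restrict _ (fun y => ∑ m ∈ subtree pa k, F m y)]
    split_ifs with hsep
    · rfl
    have htop : k ≠ r → x ∉ γ (pa k) := fun hkr hpk =>
      hsep (mem_separator.mpr ⟨hkr, hx, hpk⟩)
    rw [hS.sum_subtree_eq_sum_of_parent_notMem hparent hconn hd hF hx htop, ← Finset.sum_apply, H,
      Pi.zero_apply]
  have hchildren : ∀ j ∈ children pa r k,
      Eemb (separator γ pa r j) (fun i => ∑ m ∈ subtree pa j, F m i) x =
        ∑ m ∈ subtree pa j, F m x := by
    intro j hj
    obtain ⟨hjr, hjk⟩ := mem_children.mp hj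
    rw [Eemb_apply_restrict _ (fun y => ∑ m ∈ subtree pa j, F m y)]
    split_ifs with hsep
    · rfl
    refine (hS.sum_subtree_eq_zero_of_parent_mem hparent hconn hroot hd hF hjr (hjk ▸ hx) ?_).symm
    exact fun hxj => hsep (mem_separator.mpr ⟨hjr, hxj, hjk ▸ hx⟩)
  rw [Pi.sub_apply, Finset.sum_apply, hown, sum_congr rfl hchildren, sum_subtree hroot hd,
    add_sub_cancel_right]
  exact (Eemb_apply_coe (fun i => st ⟨k, i⟩) ⟨x, hx⟩).symm

end Separator

theorem stmt17_general {n l : ℕ} (γ : Fin l → Finset (Fin n))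
    (T : SimpleGraph (Fin l)) (hTtree : T.IsTree)
    (hrip : RIP γ T)
    (r : Fin l) (pa : Fin l → Fin l) (hparoot : pa r = r)
    (hpa : ∀ k, k ≠ r → T.Adj k (pa k) ∧ T.dist (pa k) r < T.dist k r)
    (st : EuclideanSpace ℝ ((k : Fin l) × {i : Fin n // i ∈ γ k})) :
    st ∈ (LinearMap.range (Emap γ))ᗮ
    ↔ ∃ u : (j : Fin l) →
          ({i // i ∈ (if j = r then (∅ : Finset (Fin n)) else γ j ∩ γ (pa j))} → ℝ),
        ∀ (k : Fin l) (i : {i : Fin n // i ∈ γ k}),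
          st ⟨k, i⟩ =
            (Eemb (if k = r then (∅ : Finset (Fin n)) else γ k ∩ γ (pa k)) (u k)
              - ∑ j ∈ Finset.univ.filter (fun j => j ≠ r ∧ pa j = k),
                  Eemb (if j = r then (∅ : Finset (Fin n)) else γ j ∩ γ (pa j)) (u j))
              i.1 := by
  set d : Fin l → ℕ := fun k => T.dist k r
  have hd : ∀ k, k ≠ r → d (pa k) < d k := fun k hk => (hpa k hk).2
  have hparent : ∀ a b, T.Adj a b → pa a = b ∨ pa b = a :=
    fun _ _ => hTtree.adj_parent hd fun k hk => (hpa k hk).1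
  rw [mem_orthogonal_range_Emap_iff]
  exact ⟨exists_separator_potential_of_sum_Eemb_eq_zero hTtree.connected hrip hparent hparoot hd
    st, fun ⟨u, hu⟩ => sum_Eemb_eq_zero_of_separator_potential st u hu⟩

theorem stmt17 {n l : ℕ} (γ : Fin l → Finset (Fin n))
    (hcover : ∀ i : Fin n, ∃ k, i ∈ γ k)
    (T : SimpleGraph (Fin l)) (hTsub : T ≤ interGraph γ) (hTtree : T.IsTree)
    (hrip : RIP γ T)
    (r : Fin l) (pa : Fin l → Fin l) (hparoot : pa r = r)
    (hpa : ∀ k, k ≠ r → T.Adj k (pa k) ∧ T.dist (pa k) r < T.dist k r)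
    (st : EuclideanSpace ℝ ((k : Fin l) × {i : Fin n // i ∈ γ k})) :
    st ∈ (LinearMap.range (Emap γ))ᗮ
    ↔ ∃ u : (j : Fin l) →
          ({i // i ∈ (if j = r then (∅ : Finset (Fin n)) else γ j ∩ γ (pa j))} → ℝ),
        ∀ (k : Fin l) (i : {i : Fin n // i ∈ γ k}),
          st ⟨k, i⟩ =
            (Eemb (if k = r then (∅ : Finset (Fin n)) else γ k ∩ γ (pa k)) (u k)
              - ∑ j ∈ Finset.univ.filter (fun j => j ≠ r ∧ pa j = k),
                  Eemb (if j = r then (∅ : Finset (Fin n)) else γ j ∩ γ (pa j)) (u j))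
              i.1 :=
  stmt17_general γ T hTtree hrip r pa hparoot hpa st
end
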